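/- arXiv:2409.08770 — 2 statements merged into one kernel-verified Lean document; each statement's English description precedes it below -/
import Mathlib

section
/- Let f : ℝ^d → ℝ be differentiable with L̄-Lipschitz gradient and bounded below by f̲* ∈ ℝ. Let (θ_t) satisfy θ_{t+1} = θ_t − η_t g_t, where η_t ∈ [η_min, η_max] ⊂ [0, 2/L̄) with ∑_{t=0}^{T−1} η_t ≠ 0, and where conditionally E[g_t] = ∇f(θ_t) and E‖g_t − ∇f(θ_t)‖² ≤ σ²/b_t. Then for all T ≥ 1: min_{0≤t≤T−1} E‖∇f(θ_t)‖² ≤ (2(f(θ₀) − f̲*)/(2 − L̄η_max))·(1/∑_{t=0}^{T−1}η_t) + (L̄σ²/(2 − L̄η_max))·(∑_{t=0}^{T−1} η_t²/b_t)/(∑_{t=0}^{T−1} η_t). -/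
open MeasureTheory

theorem descent_lemma {F : Type*} [NormedAddCommGroup F] [InnerProductSpace ℝ F] [CompleteSpace F]
    (f : F → ℝ) (L : NNReal) (hdiff : Differentiable ℝ f)
    (hlip : LipschitzWith L (gradient f)) (x y : F) :
    f y ≤ f x + inner ℝ (gradient f x) (y - x) + (L : ℝ) / 2 * ‖y - x‖ ^ 2 := by
  set v := y - x with hv
  have hderiv : ∀ s : ℝ, HasDerivAt (fun s : ℝ => f (x + s • v))
      (inner ℝ (gradient f (x + s • v)) v : ℝ) s := by
    intro s
    have h1 : HasDerivAt (fun s : ℝ => x + s • v) v s := by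
      simpa using ((hasDerivAt_id s).smul_const v).const_add x
    have h2 := (hdiff (x + s • v)).hasGradientAt
    rw [hasGradientAt_iff_hasFDerivAt] at h2
    have := h2.comp_hasDerivAt s h1
    simpa [InnerProductSpace.toDual_apply_apply, Function.comp_def] using this
  have hcont : Continuous fun s : ℝ => (inner ℝ (gradient f (x + s • v)) v : ℝ) := by
    exact Continuous.inner (hlip.continuous.comp (continuous_const.add
      (continuous_id.smul continuous_const))) continuous_const
  have hFTC : f (x + (1:ℝ) • v) - f (x + (0:ℝ) • v)
      = ∫ s in (0:ℝ)..1, (inner ℝ (gradient f (x + s • v)) v : ℝ) := by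
    refine (intervalIntegral.integral_eq_sub_of_hasDerivAt (fun s _ => hderiv s) ?_).symm
    exact (hcont.intervalIntegrable 0 1)
  have hbound : ∀ s ∈ Set.Icc (0:ℝ) 1,
      (inner ℝ (gradient f (x + s • v)) v : ℝ) ≤ inner ℝ (gradient f x) v + (L : ℝ) * s * ‖v‖ ^ 2 := by
    intro s hs
    have h3 : (inner ℝ (gradient f (x + s • v)) v : ℝ) - inner ℝ (gradient f x) v
        = inner ℝ (gradient f (x + s • v) - gradient f x) v := by
      rw [inner_sub_left]
    have h4 : inner ℝ (gradient f (x + s • v) - gradient f x) v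
        ≤ ‖gradient f (x + s • v) - gradient f x‖ * ‖v‖ := real_inner_le_norm _ _
    have h5 : ‖gradient f (x + s • v) - gradient f x‖ ≤ (L : ℝ) * (s * ‖v‖) := by
      have := hlip.dist_le_mul (x + s • v) x
      simpa [dist_eq_norm, norm_smul, abs_of_nonneg hs.1] using this
    nlinarith [norm_nonneg v, norm_nonneg (gradient f (x + s • v) - gradient f x), hs.1]
  have hmono : (∫ s in (0:ℝ)..1, (inner ℝ (gradient f (x + s • v)) v : ℝ))
      ≤ ∫ s in (0:ℝ)..1, (inner ℝ (gradient f x) v + (L : ℝ) * s * ‖v‖ ^ 2) := by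
    apply intervalIntegral.integral_mono_on (by norm_num) (hcont.intervalIntegrable 0 1)
    · exact (Continuous.intervalIntegrable (by continuity) 0 1)
    · exact hbound
  have hcalc : (∫ s in (0:ℝ)..1, (inner ℝ (gradient f x) v + (L : ℝ) * s * ‖v‖ ^ 2))
      = inner ℝ (gradient f x) v + (L : ℝ) / 2 * ‖v‖ ^ 2 := by
    rw [intervalIntegral.integral_add (intervalIntegrable_const)
      (Continuous.intervalIntegrable (by continuity) 0 1)]
    have h6 : (fun s : ℝ => (L : ℝ) * s * ‖v‖ ^ 2) = fun s : ℝ => ((L : ℝ) * ‖v‖ ^ 2) * s := by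
      funext s; ring
    rw [h6, intervalIntegral.integral_const_mul, integral_id]
    simp
    ring
  have := hFTC
  simp only [one_smul, zero_smul, add_zero] at this
  have hxy : x + v = y := by rw [hv]; abel
  rw [hxy] at this
  linarith [hmono, hcalc.symm ▸ hmono, this]

lemma abs_coord_le_norm {d : ℕ} (x : EuclideanSpace ℝ (Fin d)) (i : Fin d) : |x i| ≤ ‖x‖ := by
  rw [EuclideanSpace.norm_eq, ← Real.sqrt_sq_eq_abs]
  apply Real.sqrt_le_sqrt
  have := Finset.single_le_sum (f := fun j => ‖x j‖ ^ 2) (fun j _ => by positivity)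
    (Finset.mem_univ i)
  simpa [Real.norm_eq_abs, sq_abs] using this

set_option maxHeartbeats 2000000 in
theorem stmt_15 {Ω : Type*} {m0 : MeasurableSpace Ω} (μ : Measure Ω) [IsProbabilityMeasure μ]
    {d : ℕ} (f : EuclideanSpace ℝ (Fin d) → ℝ) (Lb : NNReal) (hLb : 0 < (Lb : ℝ))
    (hdiff : Differentiable ℝ f) (hlip : LipschitzWith Lb (gradient f))
    (fstar : ℝ) (hbound : ∀ θ, fstar ≤ f θ)
    (ℱ : Filtration ℕ m0)
    (θ : ℕ → Ω → EuclideanSpace ℝ (Fin d)) (g : ℕ → Ω → EuclideanSpace ℝ (Fin d))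
    (θ₀ : EuclideanSpace ℝ (Fin d)) (hθ0 : θ 0 = fun _ => θ₀)
    (η : ℕ → ℝ) (ηmin ηmax : ℝ) (hηmin : 0 ≤ ηmin) (hηmax : ηmax < 2 / (Lb : ℝ))
    (hη : ∀ t, η t ∈ Set.Icc ηmin ηmax)
    (b : ℕ → ℝ) (hb : ∀ t, 0 < b t) (σ : ℝ)
    (hupdate : ∀ t ω, θ (t + 1) ω = θ t ω - η t • g t ω)
    (hadapted : ∀ t, StronglyMeasurable[ℱ t] (θ t))
    (hgint : ∀ t, Integrable (g t) μ)
    (hvint : ∀ t, Integrable (fun ω => ‖g t ω - gradient f (θ t ω)‖ ^ 2) μ)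
    (hunbiased : ∀ t, μ[g t | ℱ t] =ᵐ[μ] fun ω => gradient f (θ t ω))
    (hvar : ∀ t, ∀ᵐ ω ∂μ,
      (μ[fun ω' => ‖g t ω' - gradient f (θ t ω')‖ ^ 2 | ℱ t]) ω ≤ σ ^ 2 / b t) :
    ∀ T : ℕ, 1 ≤ T → (∑ t ∈ Finset.range T, η t) ≠ 0 →
      (⨅ t : Fin T, ∫ ω, ‖gradient f (θ t ω)‖ ^ 2 ∂μ)
        ≤ 2 * (f θ₀ - fstar) / (2 - Lb * ηmax) * (1 / ∑ t ∈ Finset.range T, η t)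
          + (Lb : ℝ) * σ ^ 2 / (2 - Lb * ηmax)
            * ((∑ t ∈ Finset.range T, (η t) ^ 2 / b t) / ∑ t ∈ Finset.range T, η t) := by
  intro T hT hS
  have hTpos : 0 < T := hT
  haveI : Nonempty (Fin T) := ⟨⟨0, hTpos⟩⟩
  set X : ℕ → Ω → EuclideanSpace ℝ (Fin d) := fun t ω => gradient f (θ t ω) with hX
  set G : ℕ → ℝ := fun t => ∫ ω, ‖X t ω‖ ^ 2 ∂μ with hG
  set S : ℝ := ∑ t ∈ Finset.range T, η t with hSdef
  set Q : ℝ := ∑ t ∈ Finset.range T, (η t) ^ 2 / b t with hQdef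
  have hGnonneg : ∀ t, 0 ≤ G t := fun t => integral_nonneg fun ω => by positivity
  have hL2 : (0 : ℝ) < 2 - Lb * ηmax := by
    have : (Lb : ℝ) * ηmax < 2 := by
      have := (lt_div_iff₀' hLb).mp hηmax
      linarith
    linarith
  have hηnn : ∀ t, 0 ≤ η t := fun t => le_trans hηmin (hη t).1
  have hSpos : 0 < S := by
    rcases lt_or_eq_of_le (Finset.sum_nonneg fun t (_ : t ∈ Finset.range T) => hηnn t) with h | h
    · exact h
    · exact absurd h.symm hS
  have hQnn : 0 ≤ Q := Finset.sum_nonneg fun t _ => div_nonneg (by positivity) (hb t).le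
  have hD : 0 ≤ f θ₀ - fstar := by linarith [hbound θ₀]
  set m : ℝ := ⨅ t : Fin T, ∫ ω, ‖gradient f (θ t ω)‖ ^ 2 ∂μ with hm
  have hbdd : BddBelow (Set.range fun t : Fin T => ∫ ω, ‖gradient f (θ t ω)‖ ^ 2 ∂μ) :=
    (Set.finite_range _).bddBelow
  have hmle : ∀ t : Fin T, m ≤ G t := fun t => ciInf_le hbdd t
  have hRHSnn : 0 ≤ 2 * (f θ₀ - fstar) / (2 - Lb * ηmax) * (1 / S)
      + (Lb : ℝ) * σ ^ 2 / (2 - Lb * ηmax) * (Q / S) := by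
    have h1 : 0 ≤ 2 * (f θ₀ - fstar) / (2 - Lb * ηmax) * (1 / S) := by
      apply mul_nonneg (div_nonneg (by linarith) hL2.le)
      positivity
    have h2 : 0 ≤ (Lb : ℝ) * σ ^ 2 / (2 - Lb * ηmax) * (Q / S) := by
      apply mul_nonneg (div_nonneg (by positivity) hL2.le)
      exact div_nonneg hQnn hSpos.le
    linarith
  by_cases hintall : ∀ t : Fin T, Integrable (fun ω => ‖X t ω‖ ^ 2) μ
  swap
  · push_neg at hintall
    obtain ⟨t, ht⟩ := hintall
    have : G t = 0 := integral_undef ht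
    exact le_trans (le_of_le_of_eq (hmle t) this) hRHSnn
  -- main case
  have hmemb : ∀ t, StronglyMeasurable (θ t) := fun t => (hadapted t).mono (ℱ.le t)
  have hXsm : ∀ t, StronglyMeasurable[ℱ t] (X t) := fun t =>
    hlip.continuous.comp_stronglyMeasurable (hadapted t)
  have hXm : ∀ t, AEStronglyMeasurable (X t) μ := fun t =>
    ((hXsm t).mono (ℱ.le t)).aestronglyMeasurable
  set c : ℝ := (2 - Lb * ηmax) / 2 with hc
  have hcpos : 0 < c := by positivity
  -- the key one-step estimate
  have step : ∀ t < T, Integrable (fun ω => f (θ t ω)) μ →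
      Integrable (fun ω => f (θ (t + 1) ω)) μ ∧
      ∫ ω, f (θ (t + 1) ω) ∂μ ≤ (∫ ω, f (θ t ω) ∂μ) - c * η t * G t
        + (Lb : ℝ) * σ ^ 2 / 2 * ((η t) ^ 2 / b t) := by
    intro t htT hFt
    have hXt : Integrable (fun ω => ‖X t ω‖ ^ 2) μ := hintall ⟨t, htT⟩
    set h : Ω → EuclideanSpace ℝ (Fin d) := fun ω => g t ω - X t ω with hh
    have hXint : Integrable (X t) μ := by
      refine Integrable.mono ((integrable_const (1 : ℝ)).add hXt) (hXm t) ?_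
      filter_upwards with ω
      simp only [Pi.add_apply]
      have h1 : (0:ℝ) ≤ 1 + ‖X t ω‖ ^ 2 := by positivity
      rw [Real.norm_eq_abs, abs_of_nonneg h1]
      nlinarith [norm_nonneg (X t ω)]
    have hhint : Integrable h μ := (hgint t).sub hXint
    have hh2int : Integrable (fun ω => ‖h ω‖ ^ 2) μ := hvint t
    have hcondh : μ[h | ℱ t] =ᵐ[μ] 0 := by
      refine (condExp_sub (hgint t) hXint (ℱ t)).trans ?_
      have h2 : μ[X t | ℱ t] = X t :=
        condExp_of_stronglyMeasurable (ℱ.le t) (hXsm t) hXint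
      filter_upwards [hunbiased t] with ω hω
      simp only [Pi.sub_apply, h2, hω, Pi.zero_apply]
      simp [hX]
    -- coordinates
    have hXi_sm : ∀ i, StronglyMeasurable[ℱ t] (fun ω => X t ω i) := fun i =>
      (EuclideanSpace.proj i : EuclideanSpace ℝ (Fin d) →L[ℝ] ℝ).continuous.comp_stronglyMeasurable
        (hXsm t)
    have hhi_int : ∀ i : Fin d, Integrable (fun ω => h ω i) μ := fun i => by
      have := (EuclideanSpace.proj i : EuclideanSpace ℝ (Fin d) →L[ℝ] ℝ).integrable_comp hhint
      simpa using this
    have hcondhi : ∀ i : Fin d, (0 : Ω → ℝ) =ᵐ[μ] μ[fun ω => h ω i | ℱ t] := by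
      intro i
      refine ae_eq_condExp_of_forall_setIntegral_eq (ℱ.le t) (hhi_int i)
        (fun s _ _ => (integrable_const (0:ℝ)).integrableOn) (fun s hs hμs => ?_)
        (StronglyMeasurable.aestronglyMeasurable (@stronglyMeasurable_const _ _ (ℱ t) _ 0))
      have h3 : ∫ ω in s, h ω ∂μ = 0 := by
        rw [← setIntegral_condExp (ℱ.le t) hhint hs]
        rw [setIntegral_congr_ae ((ℱ.le t) s hs) (hcondh.mono fun ω hω _ => hω)]
        simp
      have h4 : ∫ ω in s, h ω i ∂μ
          = (EuclideanSpace.proj i : EuclideanSpace ℝ (Fin d) →L[ℝ] ℝ) (∫ ω in s, h ω ∂μ) := by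
        rw [← ContinuousLinearMap.integral_comp_comm _ hhint.integrableOn]
        rfl
      rw [h4, h3]
      simp
    have hXihi_int : ∀ i : Fin d, Integrable (fun ω => X t ω i * h ω i) μ := by
      intro i
      refine Integrable.mono (hXt.add hh2int) ?_ ?_
      · exact (((hXi_sm i).mono (ℱ.le t)).aestronglyMeasurable).mul
          (hhi_int i).aestronglyMeasurable
      · filter_upwards with ω
        simp only [Pi.add_apply]
        have e1 := abs_coord_le_norm (X t ω) i
        have e2 := abs_coord_le_norm (h ω) i
        have e3 : (0:ℝ) ≤ ‖X t ω‖ ^ 2 + ‖h ω‖ ^ 2 := by positivity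
        rw [Real.norm_eq_abs, Real.norm_eq_abs, abs_of_nonneg e3, abs_mul]
        nlinarith [abs_nonneg (X t ω i), abs_nonneg (h ω i),
          sq_nonneg (‖X t ω‖ - ‖h ω‖), norm_nonneg (X t ω), norm_nonneg (h ω)]
    have hint_Xihi : ∀ i : Fin d, ∫ ω, X t ω i * h ω i ∂μ = 0 := by
      intro i
      have hpull := condExp_mul_of_stronglyMeasurable_left (m := ℱ t) (mΩ := m0) (μ := μ)
        (hXi_sm i) (hXihi_int i) (hhi_int i)
      have hz : ((fun ω => X t ω i) * μ[fun ω => h ω i | ℱ t]) =ᵐ[μ] (0 : Ω → ℝ) := by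
        filter_upwards [(hcondhi i).symm] with ω hω
        simp [Pi.mul_apply, hω]
      calc ∫ ω, X t ω i * h ω i ∂μ
          = ∫ ω, (μ[(fun ω => X t ω i) * (fun ω => h ω i) | ℱ t]) ω ∂μ :=
            (integral_condExp (ℱ.le t)).symm
        _ = ∫ ω, (0:ℝ) ∂μ := integral_congr_ae (hpull.trans hz)
        _ = 0 := by simp
    have hinner_eq : ∀ ω, (inner ℝ (X t ω) (h ω) : ℝ) = ∑ i, X t ω i * h ω i := by
      intro ω
      simp [PiLp.inner_apply, RCLike.inner_apply, starRingEnd_apply, mul_comm]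
    have hint_Xh : ∫ ω, (inner ℝ (X t ω) (h ω) : ℝ) ∂μ = 0 := by
      calc ∫ ω, (inner ℝ (X t ω) (h ω) : ℝ) ∂μ = ∫ ω, ∑ i, X t ω i * h ω i ∂μ := by
            exact integral_congr_ae (Filter.Eventually.of_forall hinner_eq)
        _ = ∑ i, ∫ ω, X t ω i * h ω i ∂μ := integral_finset_sum _ fun i _ => hXihi_int i
        _ = 0 := by simp [hint_Xihi]
    have hXh_int : Integrable (fun ω => (inner ℝ (X t ω) (h ω) : ℝ)) μ := by
      refine Integrable.mono (hXt.add hh2int) ((hXm t).inner hhint.aestronglyMeasurable) ?_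
      filter_upwards with ω
      simp only [Pi.add_apply]
      have e3 : (0:ℝ) ≤ ‖X t ω‖ ^ 2 + ‖h ω‖ ^ 2 := by positivity
      rw [Real.norm_eq_abs, Real.norm_eq_abs, abs_of_nonneg e3]
      have := abs_real_inner_le_norm (X t ω) (h ω)
      nlinarith [sq_nonneg (‖X t ω‖ - ‖h ω‖), norm_nonneg (X t ω), norm_nonneg (h ω)]
    have hgd : ∀ ω, g t ω = X t ω + h ω := by
      intro ω; rw [hh]; simp
    have hip_eq : (fun ω => (inner ℝ (X t ω) (g t ω) : ℝ))
        = fun ω => ‖X t ω‖ ^ 2 + (inner ℝ (X t ω) (h ω) : ℝ) := by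
      funext ω
      rw [hgd ω, inner_add_right, real_inner_self_eq_norm_sq]
    have hip_int : Integrable (fun ω => (inner ℝ (X t ω) (g t ω) : ℝ)) μ := by
      rw [hip_eq]; exact hXt.add hXh_int
    have hint_Xg : ∫ ω, (inner ℝ (X t ω) (g t ω) : ℝ) ∂μ = G t := by
      rw [hip_eq, integral_add hXt hXh_int, hint_Xh, add_zero, hG]
    have hg2_eq : (fun ω => ‖g t ω‖ ^ 2)
        = fun ω => ‖X t ω‖ ^ 2 + 2 * (inner ℝ (X t ω) (h ω) : ℝ) + ‖h ω‖ ^ 2 := by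
      funext ω
      rw [hgd ω, @norm_add_sq_real]
    have iA : Integrable (fun ω => ‖X t ω‖ ^ 2 + 2 * (inner ℝ (X t ω) (h ω) : ℝ)) μ :=
      hXt.add (hXh_int.const_mul 2)
    have iB : Integrable (fun ω => 2 * (inner ℝ (X t ω) (h ω) : ℝ)) μ := hXh_int.const_mul 2
    have hg2int : Integrable (fun ω => ‖g t ω‖ ^ 2) μ := by
      rw [hg2_eq]; exact iA.add hh2int
    have hint_h2 : ∫ ω, ‖h ω‖ ^ 2 ∂μ ≤ σ ^ 2 / b t := by
      have e1 : ∫ ω, ‖h ω‖ ^ 2 ∂μ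
          = ∫ ω, (μ[fun ω' => ‖h ω'‖ ^ 2 | ℱ t]) ω ∂μ := (integral_condExp (ℱ.le t)).symm
      rw [e1]
      calc ∫ ω, (μ[fun ω' => ‖h ω'‖ ^ 2 | ℱ t]) ω ∂μ ≤ ∫ _ω, σ ^ 2 / b t ∂μ := by
            refine integral_mono_ae integrable_condExp (integrable_const _) ?_
            exact hvar t
        _ = σ ^ 2 / b t := by simp
    have hint_g2 : ∫ ω, ‖g t ω‖ ^ 2 ∂μ ≤ G t + σ ^ 2 / b t := by
      rw [hg2_eq, integral_add iA hh2int,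
        integral_add hXt iB, integral_const_mul, hint_Xh]
      rw [hG]
      simp only [mul_zero, add_zero]
      linarith [hint_h2]
    -- pointwise descent
    set cg : ℝ := (Lb : ℝ) / 2 * (η t) ^ 2 with hcg
    have hcgnn : 0 ≤ cg := by positivity
    set R : Ω → ℝ := fun ω =>
      f (θ t ω) - η t * (inner ℝ (X t ω) (g t ω) : ℝ) + cg * ‖g t ω‖ ^ 2 with hR
    have hpt : ∀ ω, f (θ (t + 1) ω) ≤ R ω := by
      intro ω
      have hd := descent_lemma f Lb hdiff hlip (θ t ω) (θ (t + 1) ω)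
      have hu : θ (t + 1) ω - θ t ω = -(η t • g t ω) := by
        rw [hupdate t ω]; abel
      rw [hu] at hd
      have e1 : (inner ℝ (gradient f (θ t ω)) (-(η t • g t ω)) : ℝ)
          = -(η t * (inner ℝ (X t ω) (g t ω) : ℝ)) := by
        rw [inner_neg_right, real_inner_smul_right]
      have e2 : ‖-(η t • g t ω)‖ ^ 2 = (η t) ^ 2 * ‖g t ω‖ ^ 2 := by
        rw [norm_neg, norm_smul]
        simp [mul_pow, sq_abs]
      rw [e1, e2] at hd
      rw [hR]
      simp only [hcg]
      nlinarith [hd]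
    have hRint : Integrable R μ :=
      (hFt.sub (hip_int.const_mul (η t))).add (hg2int.const_mul cg)
    have hF1m : AEStronglyMeasurable (fun ω => f (θ (t + 1) ω)) μ :=
      (hdiff.continuous.comp_stronglyMeasurable (hmemb (t + 1))).aestronglyMeasurable
    have hF1int : Integrable (fun ω => f (θ (t + 1) ω)) μ := by
      refine Integrable.mono (hRint.norm.add (integrable_const |fstar|)) hF1m ?_
      filter_upwards with ω
      simp only [Pi.add_apply]
      have h1 := hbound (θ (t + 1) ω)
      have h2 := hpt ω
      have h3 : (0:ℝ) ≤ ‖R ω‖ + |fstar| := by positivity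
      rw [Real.norm_eq_abs, Real.norm_eq_abs (‖R ω‖ + |fstar|), abs_of_nonneg h3,
        Real.norm_eq_abs (R ω)]
      rw [abs_le]
      constructor
      · linarith [neg_abs_le fstar, abs_nonneg (R ω)]
      · linarith [le_abs_self (R ω), abs_nonneg fstar]
    refine ⟨hF1int, ?_⟩
    have hIle : ∫ ω, f (θ (t + 1) ω) ∂μ ≤ ∫ ω, R ω ∂μ :=
      integral_mono hF1int hRint hpt
    have hIR : ∫ ω, R ω ∂μ
        = (∫ ω, f (θ t ω) ∂μ) - η t * G t + cg * ∫ ω, ‖g t ω‖ ^ 2 ∂μ := by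
      have iC : Integrable (fun ω => η t * (inner ℝ (X t ω) (g t ω) : ℝ)) μ :=
        hip_int.const_mul (η t)
      have iD : Integrable (fun ω => f (θ t ω) - η t * (inner ℝ (X t ω) (g t ω) : ℝ)) μ :=
        hFt.sub iC
      have iE : Integrable (fun ω => cg * ‖g t ω‖ ^ 2) μ := hg2int.const_mul cg
      rw [hR]
      rw [integral_add iD iE, integral_sub hFt iC, integral_const_mul, integral_const_mul,
        hint_Xg]
    have hstep2 : cg * ∫ ω, ‖g t ω‖ ^ 2 ∂μ ≤ cg * (G t + σ ^ 2 / b t) :=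
      mul_le_mul_of_nonneg_left hint_g2 hcgnn
    have halg : (∫ ω, f (θ t ω) ∂μ) - η t * G t + cg * (G t + σ ^ 2 / b t)
        ≤ (∫ ω, f (θ t ω) ∂μ) - c * η t * G t + (Lb : ℝ) * σ ^ 2 / 2 * ((η t) ^ 2 / b t) := by
      have e1 : cg * (σ ^ 2 / b t) = (Lb : ℝ) * σ ^ 2 / 2 * ((η t) ^ 2 / b t) := by
        rw [hcg]; ring
      have e2 : - η t * G t + cg * G t ≤ - c * η t * G t := by
        rw [hcg, hc]
        have hη1 : η t ≤ ηmax := (hη t).2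
        have hη0 : 0 ≤ η t := hηnn t
        have hG0 : 0 ≤ G t := hGnonneg t
        nlinarith [mul_nonneg (mul_nonneg hLb.le (mul_nonneg hη0 hG0)) (sub_nonneg.mpr hη1),
          mul_nonneg hη0 hG0, hLb.le]
      have e3 : cg * (G t + σ ^ 2 / b t) = cg * G t + cg * (σ ^ 2 / b t) := by ring
      linarith [e1, e2, e3]
    linarith [hIle, hIR, hstep2, halg]
  -- telescoping
  have tele : ∀ n, n ≤ T → Integrable (fun ω => f (θ n ω)) μ ∧
      ∫ ω, f (θ n ω) ∂μ ≤ f θ₀ - ∑ s ∈ Finset.range n, c * η s * G s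
        + ∑ s ∈ Finset.range n, (Lb : ℝ) * σ ^ 2 / 2 * ((η s) ^ 2 / b s) := by
    intro n
    induction n with
    | zero =>
      intro _
      constructor
      · rw [hθ0]; exact integrable_const _
      · rw [hθ0]; simp
    | succ k ih =>
      intro hk
      obtain ⟨ihint, ihle⟩ := ih (le_of_lt hk)
      obtain ⟨h1, h2⟩ := step k hk ihint
      refine ⟨h1, ?_⟩
      rw [Finset.sum_range_succ, Finset.sum_range_succ]
      linarith
  obtain ⟨hFT, hle⟩ := tele T le_rfl
  have hfstar : fstar ≤ ∫ ω, f (θ T ω) ∂μ := by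
    calc fstar = ∫ _ω, fstar ∂μ := by simp
    _ ≤ _ := integral_mono (integrable_const _) hFT fun ω => hbound _
  have hsum1 : ∑ s ∈ Finset.range T, c * η s * G s
      ≤ f θ₀ - fstar + (Lb : ℝ) * σ ^ 2 / 2 * Q := by
    have e : ∑ s ∈ Finset.range T, (Lb : ℝ) * σ ^ 2 / 2 * ((η s) ^ 2 / b s)
        = (Lb : ℝ) * σ ^ 2 / 2 * Q := by rw [hQdef, Finset.mul_sum]
    rw [e] at hle
    linarith
  have hsum2 : c * m * S ≤ ∑ s ∈ Finset.range T, c * η s * G s := by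
    rw [hSdef, Finset.mul_sum]
    refine Finset.sum_le_sum fun s hs => ?_
    have hms : m ≤ G s := hmle ⟨s, Finset.mem_range.mp hs⟩
    have hη0 := hηnn s
    have := mul_nonneg (mul_nonneg hcpos.le hη0) (sub_nonneg.mpr hms)
    nlinarith
  have hfinal : c * m * S ≤ f θ₀ - fstar + (Lb : ℝ) * σ ^ 2 / 2 * Q := le_trans hsum2 hsum1
  have heq : 2 * (f θ₀ - fstar) / (2 - Lb * ηmax) * (1 / S)
      + (Lb : ℝ) * σ ^ 2 / (2 - Lb * ηmax) * (Q / S)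
      = (f θ₀ - fstar + (Lb : ℝ) * σ ^ 2 / 2 * Q) / (c * S) := by
    rw [hc]; field_simp
  rw [heq, le_div_iff₀ (by positivity)]
  nlinarith [hfinal]
end

section
/- Let f : ℝ^d → ℝ be convex and differentiable with L̄-Lipschitz gradient, bounded below by f̲* ∈ ℝ, with a global minimizer θ* and f* = f(θ*). Let (θ_t) satisfy θ_{t+1} = θ_t − η_t g_t with η_t ∈ [η_min, η_max] ⊂ [0, 2/L̄), ∑_{t=0}^{T−1} η_t ≠ 0, conditionally E[g_t] = ∇f(θ_t) and E‖g_t − ∇f(θ_t)‖² ≤ σ²/b_t. Then for all T ≥ 1: min_{0≤t≤T−1} E[f(θ_t) − f*] ≤ (‖θ₀ − θ*‖²/2 + η_max(f(θ₀) − f̲*)/(2 − L̄η_max))·(1/∑_{t=0}^{T−1}η_t) + (σ²/2)(1 + L̄η_max/(2 − L̄η_max))·(∑_{t=0}^{T−1}η_t²/b_t)/(∑_{t=0}^{T−1}η_t). -/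
open MeasureTheory
open scoped RealInnerProductSpace

section Analysis
variable {E : Type*} [NormedAddCommGroup E] [InnerProductSpace ℝ E] [CompleteSpace E]

lemma sgd_path_deriv {f : E → ℝ} (hdiff : Differentiable ℝ f) (x v : E) (t : ℝ) :
    HasDerivAt (fun s : ℝ => f (x + s • v)) ⟪gradient f (x + t • v), v⟫ t := by
  have h1 : HasDerivAt (fun s : ℝ => x + s • v) v t := by
    simpa using ((hasDerivAt_id t).smul_const v).const_add x
  have h2 : HasFDerivAt f (InnerProductSpace.toDual ℝ E (gradient f (x + t • v))) (x + t • v) :=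
    hasGradientAt_iff_hasFDerivAt.mp (hdiff _).hasGradientAt
  simpa [InnerProductSpace.toDual_apply_apply, Function.comp_def] using h2.comp_hasDerivAt t h1

lemma sgd_descent {f : E → ℝ} {L : NNReal} (hdiff : Differentiable ℝ f)
    (hlip : LipschitzWith L (gradient f)) (x y : E) :
    f y ≤ f x + ⟪gradient f x, y - x⟫ + (L : ℝ) / 2 * ‖y - x‖ ^ 2 := by
  set v := y - x with hv
  have hgc : Continuous (gradient f) := hlip.continuous
  have hcont : Continuous fun t : ℝ => ⟪gradient f (x + t • v), v⟫ := by
    exact (hgc.comp (continuous_const.add (continuous_id.smul continuous_const))).inner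
      continuous_const
  have key : f (x + (1:ℝ) • v) - f (x + (0:ℝ) • v)
      = ∫ t in (0:ℝ)..1, ⟪gradient f (x + t • v), v⟫ := by
    rw [intervalIntegral.integral_eq_sub_of_hasDerivAt
      (fun t _ => sgd_path_deriv hdiff x v t) (hcont.intervalIntegrable 0 1)]
  have hcont2 : Continuous fun t : ℝ => ⟪gradient f x, v⟫ + (L : ℝ) * ‖v‖ ^ 2 * t := by
    continuity
  have hle : ∫ t in (0:ℝ)..1, ⟪gradient f (x + t • v), v⟫
      ≤ ∫ t in (0:ℝ)..1, (⟪gradient f x, v⟫ + (L : ℝ) * ‖v‖ ^ 2 * t) := by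
    refine intervalIntegral.integral_mono_on (by norm_num) (hcont.intervalIntegrable 0 1)
      (hcont2.intervalIntegrable 0 1) ?_
    intro t ht
    have h1 : ⟪gradient f (x + t • v) - gradient f x, v⟫
        ≤ ‖gradient f (x + t • v) - gradient f x‖ * ‖v‖ := real_inner_le_norm _ _
    have h2 : ‖gradient f (x + t • v) - gradient f x‖ ≤ (L : ℝ) * (t * ‖v‖) := by
      have := hlip.dist_le_mul (x + t • v) x
      rw [dist_eq_norm] at this
      simpa [norm_smul, abs_of_nonneg ht.1] using this
    have h3 : ⟪gradient f (x + t • v), v⟫ = ⟪gradient f x, v⟫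
        + ⟪gradient f (x + t • v) - gradient f x, v⟫ := by
      rw [inner_sub_left]; ring
    have hv0 : (0:ℝ) ≤ ‖v‖ := norm_nonneg v
    nlinarith [h1, h2, mul_le_mul_of_nonneg_right h2 hv0]
  have hval : ∫ t in (0:ℝ)..1, (⟪gradient f x, v⟫ + (L : ℝ) * ‖v‖ ^ 2 * t)
      = ⟪gradient f x, v⟫ + (L : ℝ) / 2 * ‖v‖ ^ 2 := by
    rw [intervalIntegral.integral_add (intervalIntegrable_const)
      (Continuous.intervalIntegrable (by continuity : Continuous fun t : ℝ => (L:ℝ) * ‖v‖ ^ 2 * t) 0 1)]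
    rw [intervalIntegral.integral_const, show (fun t:ℝ => (L:ℝ) * ‖v‖ ^ 2 * t) = fun t:ℝ => ((L:ℝ) * ‖v‖ ^ 2) * t from rfl, intervalIntegral.integral_const_mul, integral_id]
    simp
    ring
  have := key.symm ▸ (hle.trans_eq hval)
  simp only [one_smul, zero_smul, add_zero] at key
  have hxy : x + v = y := by rw [hv]; abel
  rw [hxy] at key
  linarith [key ▸ (hle.trans_eq hval)]

lemma sgd_grad_dom {f : E → ℝ} {L : NNReal} (hL : 0 < (L:ℝ)) (hdiff : Differentiable ℝ f)
    (hlip : LipschitzWith L (gradient f)) {θs : E} (hmin : ∀ z, f θs ≤ f z) (x : E) :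
    ‖gradient f x‖ ^ 2 ≤ 2 * L * (f x - f θs) := by
  have h := sgd_descent hdiff hlip x (x - ((L:ℝ))⁻¹ • gradient f x)
  have h2 : x - ((L:ℝ))⁻¹ • gradient f x - x = -(((L:ℝ))⁻¹ • gradient f x) := by abel
  rw [h2] at h
  rw [inner_neg_right, inner_smul_right, real_inner_self_eq_norm_sq] at h
  have h3 : ‖-(((L:ℝ))⁻¹ • gradient f x)‖ ^ 2 = ((L:ℝ))⁻¹ ^ 2 * ‖gradient f x‖ ^ 2 := by
    rw [norm_neg, norm_smul]
    simp [abs_of_nonneg (inv_nonneg.mpr hL.le), mul_pow]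
  rw [h3] at h
  have h4 := hmin (x - ((L:ℝ))⁻¹ • gradient f x)
  have hLne : (L:ℝ) ≠ 0 := hL.ne'
  have : f θs ≤ f x + -(((L:ℝ))⁻¹ * ‖gradient f x‖ ^ 2) + (L:ℝ)/2 * (((L:ℝ))⁻¹^2 * ‖gradient f x‖^2) :=
    h4.trans h
  have hfield : (L:ℝ)/2 * (((L:ℝ))⁻¹^2) = ((L:ℝ))⁻¹/2 := by field_simp
  have hinv : (L:ℝ) * ((L:ℝ))⁻¹ = 1 := mul_inv_cancel₀ hLne
  have hinv2 : (L:ℝ)^2 * (((L:ℝ))⁻¹)^2 = 1 := by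
    rw [← mul_pow, hinv, one_pow]
  nlinarith [mul_le_mul_of_nonneg_left this (by positivity : (0:ℝ) ≤ 2 * (L:ℝ)), hinv, hinv2,
    sq_nonneg ‖gradient f x‖]

lemma sgd_convex_lb {f : E → ℝ} (hconv : ConvexOn ℝ Set.univ f) (hdiff : Differentiable ℝ f)
    (x y : E) : f x + ⟪gradient f x, y - x⟫ ≤ f y := by
  have hconvφ : ConvexOn ℝ Set.univ (f ∘ (AffineMap.lineMap x y : ℝ →ᵃ[ℝ] E)) := by
    simpa using hconv.comp_affineMap (AffineMap.lineMap x y)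
  have hfun : (f ∘ (AffineMap.lineMap x y : ℝ →ᵃ[ℝ] E)) = fun s : ℝ => f (x + s • (y - x)) := by
    funext s
    simp [AffineMap.lineMap_apply, add_comm]
  have hder : HasDerivAt (f ∘ (AffineMap.lineMap x y : ℝ →ᵃ[ℝ] E)) ⟪gradient f x, y - x⟫ 0 := by
    rw [hfun]
    simpa using sgd_path_deriv hdiff x (y - x) 0
  have hs := hconvφ.le_slope_of_hasDerivWithinAt_Ioi (Set.mem_univ (0:ℝ)) (Set.mem_univ (1:ℝ))
    one_pos hder.hasDerivWithinAt
  rw [slope_def_field] at hs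
  simp [hfun] at hs
  have hg : ⟪gradient f x, y - x⟫ = fderiv ℝ f x y - fderiv ℝ f x x := by
    rw [← map_sub]; simp
  linarith

end Analysis

section MeasAux
variable {Ω : Type*} {m m0 : MeasurableSpace Ω} {μ : Measure Ω} [IsProbabilityMeasure μ] {d : ℕ}

lemma sgd_integrable_mul {X Y : Ω → ℝ} (hX : MemLp X 2 μ) (hY : MemLp Y 2 μ) :
    Integrable (fun ω => X ω * Y ω) μ := by
  have h := L2.integrable_inner (𝕜 := ℝ) (hX.toLp X) (hY.toLp Y)
  refine h.congr ?_
  filter_upwards [hX.coeFn_toLp, hY.coeFn_toLp] with ω h1 h2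
  simp [h1, h2, RCLike.inner_apply, mul_comm]

lemma sgd_integrable_inner {E : Type*} [NormedAddCommGroup E] [InnerProductSpace ℝ E]
    {X Y : Ω → E} (hX : MemLp X 2 μ) (hY : MemLp Y 2 μ) :
    Integrable (fun ω => ⟪X ω, Y ω⟫) μ := by
  have h := L2.integrable_inner (𝕜 := ℝ) (hX.toLp X) (hY.toLp Y)
  refine h.congr ?_
  filter_upwards [hX.coeFn_toLp, hY.coeFn_toLp] with ω h1 h2
  simp [h1, h2]

lemma sgd_condexp_proj (hm : m ≤ m0) {g : Ω → EuclideanSpace ℝ (Fin d)}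
    (hg : Integrable g μ) (i : Fin d) :
    (μ[fun ω => g ω i | m]) =ᵐ[μ] fun ω => (μ[g | m]) ω i := by
  refine (ae_eq_condExp_of_forall_setIntegral_eq hm
    ((EuclideanSpace.proj (𝕜 := ℝ) i).integrable_comp hg)
    (fun s _ _ => ((EuclideanSpace.proj (𝕜 := ℝ) i).integrable_comp integrable_condExp).integrableOn)
    (fun s hs hμs => ?_) ?_).symm
  · calc ∫ ω in s, (μ[g | m]) ω i ∂μ
        = EuclideanSpace.proj (𝕜 := ℝ) i (∫ ω in s, (μ[g | m]) ω ∂μ) :=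
          (EuclideanSpace.proj (𝕜 := ℝ) i).integral_comp_comm integrable_condExp.integrableOn
      _ = EuclideanSpace.proj (𝕜 := ℝ) i (∫ ω in s, g ω ∂μ) := by
          rw [setIntegral_condExp hm hg hs]
      _ = ∫ ω in s, g ω i ∂μ :=
          ((EuclideanSpace.proj (𝕜 := ℝ) i).integral_comp_comm hg.integrableOn).symm
  · exact StronglyMeasurable.aestronglyMeasurable
      ((EuclideanSpace.proj (𝕜 := ℝ) i).continuous.comp_stronglyMeasurable
        stronglyMeasurable_condExp)

lemma sgd_memL2_proj {X : Ω → EuclideanSpace ℝ (Fin d)} (hX : MemLp X 2 μ) (i : Fin d) :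
    MemLp (fun ω => X ω i) 2 μ :=
  ((EuclideanSpace.proj (𝕜 := ℝ) i).comp_memLp' hX)

lemma sgd_tower (hm : m ≤ m0) {X Y G : Ω → EuclideanSpace ℝ (Fin d)}
    (hX2 : MemLp X 2 μ) (hXm : StronglyMeasurable[m] X)
    (hY1 : Integrable Y μ) (hY2 : MemLp Y 2 μ) (hG2 : MemLp G 2 μ)
    (hcond : μ[Y | m] =ᵐ[μ] G) :
    ∫ ω, ⟪X ω, Y ω⟫ ∂μ = ∫ ω, ⟪X ω, G ω⟫ ∂μ := by
  have hinner : ∀ (Z : Ω → EuclideanSpace ℝ (Fin d)) (ω : Ω),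
      ⟪X ω, Z ω⟫ = ∑ i : Fin d, X ω i * Z ω i := by
    intro Z ω
    simp [PiLp.inner_apply, RCLike.inner_apply, mul_comm]
  simp_rw [hinner]
  rw [integral_finset_sum _ (fun i _ => sgd_integrable_mul (sgd_memL2_proj hX2 i)
      (sgd_memL2_proj hY2 i)),
    integral_finset_sum _ (fun i _ => sgd_integrable_mul (sgd_memL2_proj hX2 i)
      (sgd_memL2_proj hG2 i))]
  refine Finset.sum_congr rfl fun i _ => ?_
  have hXi : StronglyMeasurable[m] fun ω => X ω i :=
    (EuclideanSpace.proj (𝕜 := ℝ) i).continuous.comp_stronglyMeasurable hXm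
  have hYi : Integrable (fun ω => Y ω i) μ :=
    (EuclideanSpace.proj (𝕜 := ℝ) i).integrable_comp hY1
  have hXYi : Integrable (fun ω => X ω i * Y ω i) μ :=
    sgd_integrable_mul (sgd_memL2_proj hX2 i) (sgd_memL2_proj hY2 i)
  have hpull : μ[fun ω => X ω i * Y ω i | m] =ᵐ[μ] fun ω => X ω i * (μ[fun ω' => Y ω' i | m]) ω :=
    condExp_mul_of_stronglyMeasurable_left hXi hXYi hYi
  have hcondi : (μ[fun ω' => Y ω' i | m]) =ᵐ[μ] fun ω => G ω i := by
    refine (sgd_condexp_proj hm hY1 i).trans ?_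
    filter_upwards [hcond] with ω h
    rw [h]
  calc ∫ ω, X ω i * Y ω i ∂μ = ∫ ω, (μ[fun ω' => X ω' i * Y ω' i | m]) ω ∂μ :=
        (integral_condExp hm).symm
    _ = ∫ ω, X ω i * G ω i ∂μ := by
        refine integral_congr_ae ?_
        filter_upwards [hpull, hcondi] with ω h1 h2
        rw [h1, h2]

end MeasAux

section Helpers

lemma sgd_telescope {a u v : ℕ → ℝ} (h : ∀ t, a (t + 1) + u t ≤ a t + v t) (T : ℕ) :
    ∑ t ∈ Finset.range T, u t ≤ a 0 - a T + ∑ t ∈ Finset.range T, v t := by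
  induction T with
  | zero => simp
  | succ n ih =>
    rw [Finset.sum_range_succ, Finset.sum_range_succ]
    have := h n
    linarith

end Helpers

set_option maxHeartbeats 1000000 in
theorem stmt_18 {Ω : Type*} {m0 : MeasurableSpace Ω} (μ : Measure Ω) [IsProbabilityMeasure μ]
    {d : ℕ} (f : EuclideanSpace ℝ (Fin d) → ℝ)
    (hconv : ConvexOn ℝ Set.univ f)
    (Lb : NNReal) (hLb : 0 < (Lb : ℝ))
    (hdiff : Differentiable ℝ f) (hlip : LipschitzWith Lb (gradient f))
    (fstarlow : ℝ) (hbound : ∀ θ, fstarlow ≤ f θ)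
    (θstar : EuclideanSpace ℝ (Fin d)) (hmin : ∀ θ, f θstar ≤ f θ)
    (fstar : ℝ) (hfstar : fstar = f θstar)
    (ℱ : Filtration ℕ m0)
    (θ : ℕ → Ω → EuclideanSpace ℝ (Fin d)) (g : ℕ → Ω → EuclideanSpace ℝ (Fin d))
    (θ₀ : EuclideanSpace ℝ (Fin d)) (hθ0 : θ 0 = fun _ => θ₀)
    (η : ℕ → ℝ) (ηmin ηmax : ℝ) (hηmin : 0 ≤ ηmin) (hηmax : ηmax < 2 / (Lb : ℝ))
    (hη : ∀ t, η t ∈ Set.Icc ηmin ηmax)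
    (b : ℕ → ℝ) (hb : ∀ t, 0 < b t) (σ : ℝ)
    (hupdate : ∀ t ω, θ (t + 1) ω = θ t ω - η t • g t ω)
    (hadapted : ∀ t, StronglyMeasurable[ℱ t] (θ t))
    (hgint : ∀ t, Integrable (g t) μ)
    (hfint : ∀ t, Integrable (fun ω => f (θ t ω)) μ)
    (hvint : ∀ t, Integrable (fun ω => ‖g t ω - gradient f (θ t ω)‖ ^ 2) μ)
    (hunbiased : ∀ t, μ[g t | ℱ t] =ᵐ[μ] fun ω => gradient f (θ t ω))
    (hvar : ∀ t, ∀ᵐ ω ∂μ,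
      (μ[fun ω' => ‖g t ω' - gradient f (θ t ω')‖ ^ 2 | ℱ t]) ω ≤ σ ^ 2 / b t) :
    ∀ T : ℕ, 1 ≤ T → (∑ t ∈ Finset.range T, η t) ≠ 0 →
      (⨅ t : Fin T, ∫ ω, (f (θ t ω) - fstar) ∂μ)
        ≤ (‖θ₀ - θstar‖ ^ 2 / 2 + ηmax * (f θ₀ - fstarlow) / (2 - Lb * ηmax))
            * (1 / ∑ t ∈ Finset.range T, η t)
          + σ ^ 2 / 2 * (1 + (Lb : ℝ) * ηmax / (2 - Lb * ηmax))
            * ((∑ t ∈ Finset.range T, (η t) ^ 2 / b t) / ∑ t ∈ Finset.range T, η t) := by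
  intro T hT hsumne
  -- basic positivity facts
  have hη0 : ∀ t, 0 ≤ η t := fun t => hηmin.trans (hη t).1
  have hηM : ∀ t, η t ≤ ηmax := fun t => (hη t).2
  have hηmax0 : 0 ≤ ηmax := (hη0 0).trans (hηM 0)
  have hβ : 0 < 2 - (Lb : ℝ) * ηmax := by
    have h2 : (Lb : ℝ) * (2 / (Lb : ℝ)) = 2 := by field_simp
    nlinarith [mul_lt_mul_of_pos_left hηmax hLb]
  have hSη : 0 < ∑ t ∈ Finset.range T, η t := by
    rcases (Finset.sum_nonneg fun t _ => hη0 t).lt_or_eq with h | h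
    · exact h
    · exact absurd h.symm hsumne
  have hσ2 : (0:ℝ) ≤ σ ^ 2 := sq_nonneg σ
  -- measurability
  have hθm : ∀ t, AEStronglyMeasurable (θ t) μ :=
    fun t => ((hadapted t).mono (ℱ.le t)).aestronglyMeasurable
  have hGm : ∀ t, StronglyMeasurable[ℱ t] fun ω => gradient f (θ t ω) :=
    fun t => hlip.continuous.comp_stronglyMeasurable (hadapted t)
  have hGsm : ∀ t, AEStronglyMeasurable (fun ω => gradient f (θ t ω)) μ :=
    fun t => ((hGm t).mono (ℱ.le t)).aestronglyMeasurable
  have hgm : ∀ t, AEStronglyMeasurable (g t) μ := fun t => (hgint t).1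
  -- gradient domination
  have hgraddom : ∀ x, ‖gradient f x‖ ^ 2 ≤ 2 * (Lb : ℝ) * (f x - fstar) := by
    intro x
    rw [hfstar]
    exact sgd_grad_dom hLb hdiff hlip hmin x
  -- L² facts
  have hG2 : ∀ t, MemLp (fun ω => gradient f (θ t ω)) 2 μ := by
    intro t
    rw [memLp_two_iff_integrable_sq_norm (hGsm t)]
    have ibound : Integrable (fun ω => 2 * (Lb : ℝ) * (f (θ t ω) - fstar)) μ := by
      exact ((hfint t).sub (integrable_const fstar)).const_mul (2 * (Lb : ℝ))
    refine Integrable.mono' ibound ?_ ?_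
    · simp_rw [pow_two]
      exact (hGsm t).norm.mul (hGsm t).norm
    · filter_upwards with ω
      rw [Real.norm_eq_abs, abs_of_nonneg (by positivity)]
      exact hgraddom (θ t ω)
  have hD2 : ∀ t, MemLp (fun ω => g t ω - gradient f (θ t ω)) 2 μ :=
    fun t => (memLp_two_iff_integrable_sq_norm ((hgm t).sub (hGsm t))).mpr (hvint t)
  have hg2 : ∀ t, MemLp (g t) 2 μ := by
    intro t
    have h := (hD2 t).add (hG2 t)
    have heq : (fun ω => g t ω - gradient f (θ t ω)) + (fun ω => gradient f (θ t ω)) = g t := by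
      funext ω; simp
    rwa [heq] at h
  have hX2 : ∀ t, MemLp (fun ω => θ t ω - θstar) 2 μ := by
    intro t
    induction t with
    | zero =>
      rw [hθ0]
      exact memLp_const _
    | succ n ih =>
      have heq : (fun ω => θ (n + 1) ω - θstar)
          = (fun ω => θ n ω - θstar) - (η n) • (g n) := by
        funext ω
        simp only [Pi.sub_apply, Pi.smul_apply, hupdate n ω]
        abel
      rw [heq]
      exact ih.sub ((hg2 n).const_smul (η n))
  have hXsm : ∀ t, AEStronglyMeasurable (fun ω => θ t ω - θstar) μ :=
    fun t => (hθm t).sub aestronglyMeasurable_const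
  -- integrability of the various squares and inner products
  have hIA : ∀ t, Integrable (fun ω => ‖θ t ω - θstar‖ ^ 2) μ :=
    fun t => (memLp_two_iff_integrable_sq_norm (hXsm t)).mp (hX2 t)
  have hIG : ∀ t, Integrable (fun ω => ‖gradient f (θ t ω)‖ ^ 2) μ :=
    fun t => (memLp_two_iff_integrable_sq_norm (hGsm t)).mp (hG2 t)
  have hIg : ∀ t, Integrable (fun ω => ‖g t ω‖ ^ 2) μ :=
    fun t => (memLp_two_iff_integrable_sq_norm (hgm t)).mp (hg2 t)
  have hGint : ∀ t, Integrable (fun ω => gradient f (θ t ω)) μ :=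
    fun t => (hG2 t).integrable one_le_two
  -- tower properties
  have htow1 : ∀ t, ∫ ω, ⟪θ t ω - θstar, g t ω⟫ ∂μ
      = ∫ ω, ⟪θ t ω - θstar, gradient f (θ t ω)⟫ ∂μ :=
    fun t => sgd_tower (ℱ.le t) (hX2 t) ((hadapted t).sub stronglyMeasurable_const)
      (hgint t) (hg2 t) (hG2 t) (hunbiased t)
  have htow2 : ∀ t, ∫ ω, ⟪gradient f (θ t ω), g t ω⟫ ∂μ
      = ∫ ω, ‖gradient f (θ t ω)‖ ^ 2 ∂μ := by
    intro t
    rw [sgd_tower (ℱ.le t) (hG2 t) (hGm t) (hgint t) (hg2 t) (hG2 t) (hunbiased t)]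
    congr 1
    funext ω
    exact real_inner_self_eq_norm_sq _
  have hcross : ∀ t, ∫ ω, ⟪gradient f (θ t ω), g t ω - gradient f (θ t ω)⟫ ∂μ = 0 := by
    intro t
    have hc : μ[fun ω => g t ω - gradient f (θ t ω) | ℱ t]
        =ᵐ[μ] fun _ => (0 : EuclideanSpace ℝ (Fin d)) := by
      have h1 := condExp_sub (m := ℱ t) (μ := μ) (hgint t) (hGint t)
      have h2 : μ[fun ω => gradient f (θ t ω) | ℱ t] = fun ω => gradient f (θ t ω) :=
        condExp_of_stronglyMeasurable (ℱ.le t) (hGm t) (hGint t)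
      filter_upwards [h1, hunbiased t] with ω hω1 hω2
      have : (fun ω => g t ω - gradient f (θ t ω))
          = g t - fun ω => gradient f (θ t ω) := rfl
      rw [this, hω1]
      simp only [Pi.sub_apply, hω2, h2]
      simp
    have hY1 : Integrable (fun ω => g t ω - gradient f (θ t ω)) μ := by
      exact (hgint t).sub (hGint t)
    have h := sgd_tower (ℱ.le t) (hG2 t) (hGm t) hY1 (hD2 t) (memLp_const 0) hc
    rw [h]
    simp
  -- variance bound
  have hV : ∀ t, ∫ ω, ‖g t ω - gradient f (θ t ω)‖ ^ 2 ∂μ ≤ σ ^ 2 / b t := by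
    intro t
    rw [← integral_condExp (ℱ.le t) (f := fun ω => ‖g t ω - gradient f (θ t ω)‖ ^ 2)]
    have h := integral_mono_ae integrable_condExp (integrable_const (σ ^ 2 / b t)) (hvar t)
    simpa using h
  -- second moment decomposition
  have hSdec : ∀ t, ∫ ω, ‖g t ω‖ ^ 2 ∂μ
      ≤ ∫ ω, ‖gradient f (θ t ω)‖ ^ 2 ∂μ + σ ^ 2 / b t := by
    intro t
    have hps : (fun ω => ‖g t ω‖ ^ 2) = fun ω => ‖gradient f (θ t ω)‖ ^ 2
        + 2 * ⟪gradient f (θ t ω), g t ω - gradient f (θ t ω)⟫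
        + ‖g t ω - gradient f (θ t ω)‖ ^ 2 := by
      funext ω
      have h0 : gradient f (θ t ω) + (g t ω - gradient f (θ t ω)) = g t ω := by abel
      have h1 := norm_add_sq_real (gradient f (θ t ω)) (g t ω - gradient f (θ t ω))
      rw [h0] at h1
      linarith [h1]
    have hIc : Integrable (fun ω => ⟪gradient f (θ t ω), g t ω - gradient f (θ t ω)⟫) μ :=
      sgd_integrable_inner (hG2 t) (hD2 t)
    have iB : Integrable (fun ω => 2 * ⟪gradient f (θ t ω), g t ω - gradient f (θ t ω)⟫) μ := by
      exact hIc.const_mul 2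
    have iAB : Integrable (fun ω => ‖gradient f (θ t ω)‖ ^ 2
        + 2 * ⟪gradient f (θ t ω), g t ω - gradient f (θ t ω)⟫) μ := by
      exact (hIG t).add iB
    rw [hps, integral_add iAB (hvint t), integral_add (hIG t) iB, integral_const_mul, hcross t]
    have := hV t
    linarith
  -- step inequality 1
  have step1 : ∀ t, ∫ ω, ‖θ (t + 1) ω - θstar‖ ^ 2 ∂μ
        + 2 * η t * ∫ ω, (f (θ t ω) - fstar) ∂μ
      ≤ ∫ ω, ‖θ t ω - θstar‖ ^ 2 ∂μ + η t ^ 2 * ∫ ω, ‖g t ω‖ ^ 2 ∂μ := by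
    intro t
    have hIin : Integrable (fun ω => ⟪θ t ω - θstar, g t ω⟫) μ :=
      sgd_integrable_inner (hX2 t) (hg2 t)
    have hexp : (fun ω => ‖θ (t + 1) ω - θstar‖ ^ 2)
        = fun ω => ‖θ t ω - θstar‖ ^ 2 - 2 * η t * ⟪θ t ω - θstar, g t ω⟫
            + η t ^ 2 * ‖g t ω‖ ^ 2 := by
      funext ω
      have h1 : θ (t + 1) ω - θstar = (θ t ω - θstar) - η t • g t ω := by
        rw [hupdate t ω]; abel
      rw [h1, norm_sub_sq_real, real_inner_smul_right, norm_smul]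
      simp only [Real.norm_eq_abs, mul_pow, sq_abs]
      ring
    have heq : ∫ ω, ‖θ (t + 1) ω - θstar‖ ^ 2 ∂μ
        = ∫ ω, ‖θ t ω - θstar‖ ^ 2 ∂μ - 2 * η t * ∫ ω, ⟪θ t ω - θstar, g t ω⟫ ∂μ
          + η t ^ 2 * ∫ ω, ‖g t ω‖ ^ 2 ∂μ := by
      have i1 : Integrable (fun ω => 2 * η t * ⟪θ t ω - θstar, g t ω⟫) μ := by
        exact hIin.const_mul _
      have i2 : Integrable (fun ω => η t ^ 2 * ‖g t ω‖ ^ 2) μ := by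
        exact (hIg t).const_mul _
      have i3 : Integrable (fun ω => ‖θ t ω - θstar‖ ^ 2
          - 2 * η t * ⟪θ t ω - θstar, g t ω⟫) μ := by
        exact (hIA t).sub i1
      rw [hexp, integral_add i3 i2, integral_sub (hIA t) i1,
        integral_const_mul, integral_const_mul]
    have hconvex : ∫ ω, (f (θ t ω) - fstar) ∂μ
        ≤ ∫ ω, ⟪θ t ω - θstar, gradient f (θ t ω)⟫ ∂μ := by
      refine integral_mono_ae ((hfint t).sub (integrable_const _))
        (sgd_integrable_inner (hX2 t) (hG2 t)) ?_
      filter_upwards with ω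
      have h := sgd_convex_lb hconv hdiff (θ t ω) θstar
      have h2 : ⟪θ t ω - θstar, gradient f (θ t ω)⟫
          = -⟪gradient f (θ t ω), θstar - θ t ω⟫ := by
        rw [real_inner_comm, ← inner_neg_right]
        congr 1
        abel
      rw [hfstar, h2]
      linarith
    rw [heq, htow1 t]
    nlinarith [mul_le_mul_of_nonneg_left hconvex (by linarith [hη0 t] : (0:ℝ) ≤ 2 * η t)]
  -- step inequality 2 (descent)
  have step2 : ∀ t, ∫ ω, f (θ (t + 1) ω) ∂μ
        + (η t - (Lb : ℝ) / 2 * η t ^ 2) * ∫ ω, ‖gradient f (θ t ω)‖ ^ 2 ∂μ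
      ≤ ∫ ω, f (θ t ω) ∂μ + (Lb : ℝ) / 2 * η t ^ 2 * (σ ^ 2 / b t) := by
    intro t
    have hIgc : Integrable (fun ω => ⟪gradient f (θ t ω), g t ω⟫) μ :=
      sgd_integrable_inner (hG2 t) (hg2 t)
    have hptw : ∀ ω, f (θ (t + 1) ω) ≤ f (θ t ω) - η t * ⟪gradient f (θ t ω), g t ω⟫
        + (Lb : ℝ) / 2 * (η t ^ 2 * ‖g t ω‖ ^ 2) := by
      intro ω
      have h := sgd_descent hdiff hlip (θ t ω) (θ (t + 1) ω)
      have h1 : θ (t + 1) ω - θ t ω = -(η t • g t ω) := by rw [hupdate t ω]; abel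
      rw [h1, inner_neg_right, real_inner_smul_right, norm_neg, norm_smul] at h
      simp only [Real.norm_eq_abs, mul_pow, sq_abs] at h
      linarith [h]
    have hint : ∫ ω, f (θ (t + 1) ω) ∂μ
        ≤ ∫ ω, (f (θ t ω) - η t * ⟪gradient f (θ t ω), g t ω⟫
            + (Lb : ℝ) / 2 * (η t ^ 2 * ‖g t ω‖ ^ 2)) ∂μ := by
      refine integral_mono_ae (hfint (t + 1)) ?_ ?_
      · exact ((hfint t).sub (hIgc.const_mul _)).add (((hIg t).const_mul _).const_mul _)

      · filter_upwards with ω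
        exact hptw ω
    have j1 : Integrable (fun ω => η t * ⟪gradient f (θ t ω), g t ω⟫) μ := by
      exact hIgc.const_mul _
    have j2 : Integrable (fun ω => (Lb : ℝ) / 2 * (η t ^ 2 * ‖g t ω‖ ^ 2)) μ := by
      exact ((hIg t).const_mul _).const_mul _
    have j3 : Integrable (fun ω => f (θ t ω) - η t * ⟪gradient f (θ t ω), g t ω⟫) μ := by
      exact (hfint t).sub j1
    have j4 : Integrable (fun ω => η t ^ 2 * ‖g t ω‖ ^ 2) μ := by
      exact (hIg t).const_mul _
    rw [integral_add j3 j2, integral_sub (hfint t) j1, integral_const_mul,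
      integral_const_mul, integral_const_mul, htow2 t] at hint
    have hS := hSdec t
    nlinarith [mul_le_mul_of_nonneg_left hS (by positivity : (0:ℝ) ≤ (Lb : ℝ) / 2 * η t ^ 2)]
  -- abbreviations
  set Fs : ℕ → ℝ := fun t => ∫ ω, (f (θ t ω) - fstar) ∂μ with hFs
  set Gs : ℕ → ℝ := fun t => ∫ ω, ‖gradient f (θ t ω)‖ ^ 2 ∂μ with hGs
  set As : ℕ → ℝ := fun t => ∫ ω, ‖θ t ω - θstar‖ ^ 2 ∂μ with hAs
  set Ps : ℕ → ℝ := fun t => ∫ ω, f (θ t ω) ∂μ with hPs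
  have hGs0 : ∀ t, 0 ≤ Gs t := fun t => integral_nonneg fun ω => by positivity
  have hFs0 : ∀ t, 0 ≤ Fs t := fun t => integral_nonneg fun ω => by
    have := hmin (θ t ω); rw [hfstar]; simp only [Pi.zero_apply]; linarith
  have hAs0 : ∀ t, 0 ≤ As t := fun t => integral_nonneg fun ω => by positivity
  -- summed inequality 1
  have sum1 : ∑ t ∈ Finset.range T, 2 * η t * Fs t
      ≤ As 0 - As T + ∑ t ∈ Finset.range T, η t ^ 2 * ∫ ω, ‖g t ω‖ ^ 2 ∂μ :=
    sgd_telescope (fun t => step1 t) T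
  -- summed inequality 2
  have sum2 : ∑ t ∈ Finset.range T, (η t - (Lb : ℝ) / 2 * η t ^ 2) * Gs t
      ≤ Ps 0 - Ps T + ∑ t ∈ Finset.range T, (Lb : ℝ) / 2 * η t ^ 2 * (σ ^ 2 / b t) :=
    sgd_telescope (fun t => step2 t) T
  have hA0 : As 0 = ‖θ₀ - θstar‖ ^ 2 := by
    rw [hAs]
    simp [hθ0]
  have hP0 : Ps 0 = f θ₀ := by
    rw [hPs]
    simp [hθ0]
  have hPT : fstarlow ≤ Ps T := by
    rw [hPs]
    have := integral_mono_ae (integrable_const fstarlow) (hfint T)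
      (Filter.Eventually.of_forall fun ω => hbound (θ T ω))
    simpa using this
  -- introduce sums
  set Sη := ∑ t ∈ Finset.range T, η t with hSηdef
  set S2 := ∑ t ∈ Finset.range T, η t ^ 2 / b t with hS2def
  set SG := ∑ t ∈ Finset.range T, η t * Gs t with hSGdef
  set SF := ∑ t ∈ Finset.range T, η t * Fs t with hSFdef
  have hS20 : 0 ≤ S2 := Finset.sum_nonneg fun t _ => div_nonneg (sq_nonneg _) (hb t).le
  have hSG0 : 0 ≤ SG := Finset.sum_nonneg fun t _ => mul_nonneg (hη0 t) (hGs0 t)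
  set β := 2 - (Lb : ℝ) * ηmax with hβdef
  -- gradient sum bound:  β * SG ≤ 2 * (f θ₀ - fstarlow) + Lb * σ² * S2
  have hSGbound : β * SG ≤ 2 * (f θ₀ - fstarlow) + (Lb : ℝ) * σ ^ 2 * S2 := by
    have hterm : ∀ t ∈ Finset.range T, (β / 2) * (η t * Gs t)
        ≤ (η t - (Lb : ℝ) / 2 * η t ^ 2) * Gs t := by
      intro t _
      have h1 : (β / 2) * η t ≤ η t - (Lb : ℝ) / 2 * η t ^ 2 := by
        have := mul_le_mul_of_nonneg_left (hηM t) (mul_nonneg (hLb.le) (hη0 t))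
        nlinarith [hη0 t]
      nlinarith [hGs0 t, h1]
    have h2 : (β / 2) * SG ≤ ∑ t ∈ Finset.range T, (η t - (Lb : ℝ) / 2 * η t ^ 2) * Gs t := by
      rw [hSGdef, Finset.mul_sum]
      exact Finset.sum_le_sum hterm
    have h3 : ∑ t ∈ Finset.range T, (Lb : ℝ) / 2 * η t ^ 2 * (σ ^ 2 / b t)
        = (Lb : ℝ) / 2 * σ ^ 2 * S2 := by
      rw [hS2def, Finset.mul_sum]
      refine Finset.sum_congr rfl fun t _ => ?_
      have := (hb t).ne'
      field_simp
    rw [h3] at sum2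
    have h4 : (β / 2) * SG ≤ (f θ₀ - fstarlow) + (Lb : ℝ) / 2 * σ ^ 2 * S2 := by
      calc (β / 2) * SG ≤ _ := h2
        _ ≤ Ps 0 - Ps T + (Lb : ℝ) / 2 * σ ^ 2 * S2 := sum2
        _ ≤ (f θ₀ - fstarlow) + (Lb : ℝ) / 2 * σ ^ 2 * S2 := by
            rw [hP0]
            linarith [hPT]
    calc β * SG = 2 * (β / 2 * SG) := by ring
      _ ≤ 2 * ((f θ₀ - fstarlow) + (Lb : ℝ) / 2 * σ ^ 2 * S2) := by linarith [h4]
      _ = 2 * (f θ₀ - fstarlow) + (Lb : ℝ) * σ ^ 2 * S2 := by ring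
  -- main sum bound: 2 * SF ≤ A0 + ηmax * SG + σ² * S2
  have hSFbound : 2 * SF ≤ ‖θ₀ - θstar‖ ^ 2 + ηmax * SG + σ ^ 2 * S2 := by
    have hterm : ∀ t ∈ Finset.range T, η t ^ 2 * ∫ ω, ‖g t ω‖ ^ 2 ∂μ
        ≤ ηmax * (η t * Gs t) + σ ^ 2 * (η t ^ 2 / b t) := by
      intro t _
      have h1 : η t ^ 2 * ∫ ω, ‖g t ω‖ ^ 2 ∂μ ≤ η t ^ 2 * (Gs t + σ ^ 2 / b t) :=
        mul_le_mul_of_nonneg_left (hSdec t) (by positivity)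
      have h2 : η t ^ 2 * Gs t ≤ ηmax * (η t * Gs t) := by
        calc η t ^ 2 * Gs t = η t * (η t * Gs t) := by ring
          _ ≤ ηmax * (η t * Gs t) :=
            mul_le_mul_of_nonneg_right (hηM t) (mul_nonneg (hη0 t) (hGs0 t))
      have h3 : η t ^ 2 * (σ ^ 2 / b t) = σ ^ 2 * (η t ^ 2 / b t) := by
        field_simp
      nlinarith [h1, h2, h3]
    have h4 : ∑ t ∈ Finset.range T, η t ^ 2 * ∫ ω, ‖g t ω‖ ^ 2 ∂μ
        ≤ ηmax * SG + σ ^ 2 * S2 := by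
      calc ∑ t ∈ Finset.range T, η t ^ 2 * ∫ ω, ‖g t ω‖ ^ 2 ∂μ
          ≤ ∑ t ∈ Finset.range T, (ηmax * (η t * Gs t) + σ ^ 2 * (η t ^ 2 / b t)) :=
            Finset.sum_le_sum hterm
        _ = ηmax * SG + σ ^ 2 * S2 := by
            rw [hSGdef, hS2def, Finset.mul_sum, Finset.mul_sum, ← Finset.sum_add_distrib]
    have h5 : ∑ t ∈ Finset.range T, 2 * η t * Fs t = 2 * SF := by
      rw [hSFdef, Finset.mul_sum]
      refine Finset.sum_congr rfl fun t _ => by ring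
    rw [h5] at sum1
    calc 2 * SF ≤ As 0 - As T + ∑ t ∈ Finset.range T, η t ^ 2 * ∫ ω, ‖g t ω‖ ^ 2 ∂μ := sum1
      _ ≤ ‖θ₀ - θstar‖ ^ 2 + ηmax * SG + σ ^ 2 * S2 := by
          rw [hA0]
          linarith [hAs0 T, h4]
  -- infimum bound
  set mval := ⨅ t : Fin T, Fs t with hmval
  have hmle : mval * Sη ≤ SF := by
    have hm : ∀ t ∈ Finset.range T, η t * mval ≤ η t * Fs t := by
      intro t ht
      refine mul_le_mul_of_nonneg_left ?_ (hη0 t)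
      exact ciInf_le (Set.Finite.bddBelow (Set.finite_range _)) (⟨t, Finset.mem_range.mp ht⟩ : Fin T)
    calc mval * Sη = ∑ t ∈ Finset.range T, η t * mval := by
          rw [hSηdef, Finset.mul_sum]
          exact Finset.sum_congr rfl fun t _ => by ring
      _ ≤ SF := by rw [hSFdef]; exact Finset.sum_le_sum hm
  -- final assembly
  have hD0 : 0 ≤ f θ₀ - fstarlow := by linarith [hbound θ₀]
  have key : 2 * β * (mval * Sη) ≤ β * ‖θ₀ - θstar‖ ^ 2 + 2 * ηmax * (f θ₀ - fstarlow)
      + ηmax * (Lb : ℝ) * σ ^ 2 * S2 + β * σ ^ 2 * S2 := by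
    have h1 : 2 * (mval * Sη) ≤ ‖θ₀ - θstar‖ ^ 2 + ηmax * SG + σ ^ 2 * S2 := by
      linarith [hmle, hSFbound]
    have h2 := mul_le_mul_of_nonneg_left h1 hβ.le
    have h3 := mul_le_mul_of_nonneg_left hSGbound hηmax0
    nlinarith [h2, h3]
  have hfinal : mval * Sη ≤ ‖θ₀ - θstar‖ ^ 2 / 2 + ηmax * (f θ₀ - fstarlow) / β
      + σ ^ 2 / 2 * (1 + (Lb : ℝ) * ηmax / β) * S2 := by
    have heq : ‖θ₀ - θstar‖ ^ 2 / 2 + ηmax * (f θ₀ - fstarlow) / β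
        + σ ^ 2 / 2 * (1 + (Lb : ℝ) * ηmax / β) * S2
        = (β * ‖θ₀ - θstar‖ ^ 2 + 2 * ηmax * (f θ₀ - fstarlow)
          + ηmax * (Lb : ℝ) * σ ^ 2 * S2 + β * σ ^ 2 * S2) / (2 * β) := by
      field_simp
      ring
    rw [heq, le_div_iff₀ (by positivity)]
    nlinarith [key]
  calc mval = mval * Sη * (1 / Sη) := by
        field_simp
    _ ≤ (‖θ₀ - θstar‖ ^ 2 / 2 + ηmax * (f θ₀ - fstarlow) / β
        + σ ^ 2 / 2 * (1 + (Lb : ℝ) * ηmax / β) * S2) * (1 / Sη) :=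
        mul_le_mul_of_nonneg_right hfinal (by positivity)
    _ = (‖θ₀ - θstar‖ ^ 2 / 2 + ηmax * (f θ₀ - fstarlow) / β) * (1 / Sη)
        + σ ^ 2 / 2 * (1 + (Lb : ℝ) * ηmax / β) * (S2 / Sη) := by
        ring
end
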